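/- arXiv:0705.2576 — 2 statements merged into one kernel-verified Lean document; each statement's English description precedes it below -/
import Mathlib

section
/- Let t: Dom(t) ⊆ E → F be a densely defined A-linear operator between Hilbert A-modules. If the graph G(t) = {(x, tx) : x ∈ Dom(t)} is orthogonally complemented in E ⊕ F and the range of P_F ∘ P_{G(t)^⊥} is dense in its biorthogonal complement, then t is adjointable with densely defined adjoint t*, t is closed, and 1 + t*t is surjective. -/
/- Framework: Hilbert C*-modules over a C*-algebra `A` (via Mathlib's `CStarModule`),
densely defined operators as `LinearPMap`s, `A`-valued orthogonality, adjoints,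
regularity, graphs inside `E ⊕ F`. -/

open scoped InnerProductSpace RightActions WithCStarModule

namespace RegularOperators

variable (A : Type*) [NonUnitalCStarAlgebra A] [PartialOrder A] [StarOrderedRing A]

section Defs

variable {E F : Type*}
  [NormedAddCommGroup E] [Module ℂ E] [SMul Aᵐᵒᵖ E] [CStarModule Aᵐᵒᵖ E]
  [NormedAddCommGroup F] [Module ℂ F] [SMul Aᵐᵒᵖ F] [CStarModule Aᵐᵒᵖ F]

/-- Orthogonal complement of a subset w.r.t. the `A`-valued inner product. -/
def ortho (S : Set E) : Set E := {y | ∀ u ∈ S, ⟪u, y⟫_(Aᵐᵒᵖ) = 0}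

/-- `S` is orthogonally complemented (an orthogonal summand): every element of `E`
decomposes as a sum of an element of `S` and an element of `S^⊥`. -/
def OrthoComplemented (S : Set E) : Prop := ∀ z : E, ∃ u ∈ S, ∃ v ∈ ortho A S, z = u + v

/-- A partially defined operator is `A`-linear (for the right `A`-module action). -/
def AModuleMap (t : E →ₗ.[ℂ] F) : Prop :=
  ∀ (a : A) (x : t.domain), ∃ hx : (x : E) <• a ∈ t.domain, t ⟨(x : E) <• a, hx⟩ = (t x) <• a

/-- Kernel of a partially defined operator, as a subset of `E`. -/
def kerSet (t : E →ₗ.[ℂ] F) : Set E := {x | ∃ hx : x ∈ t.domain, t ⟨x, hx⟩ = 0}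

/-- Range of a partially defined operator. -/
def ranSet (t : E →ₗ.[ℂ] F) : Set F := {y | ∃ x : t.domain, t x = y}

/-- Domain of the adjoint: those `y` for which some `z` satisfies `⟪tx, y⟫ = ⟪x, z⟫`
for all `x` in the domain of `t`. -/
def adjDomain (t : E →ₗ.[ℂ] F) : Set F :=
  {y | ∃ z : E, ∀ x : t.domain, ⟪t x, y⟫_(Aᵐᵒᵖ) = ⟪(x : E), z⟫_(Aᵐᵒᵖ)}

/-- `s` is the adjoint operator `t*` of `t`. -/
structure IsAdjoint (t : E →ₗ.[ℂ] F) (s : F →ₗ.[ℂ] E) : Prop where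
  dom : (s.domain : Set F) = adjDomain A t
  inner_eq : ∀ (x : t.domain) (y : s.domain), ⟪t x, (y : F)⟫_(Aᵐᵒᵖ) = ⟪(x : E), s y⟫_(Aᵐᵒᵖ)

/-- The range of `1 + t*t` (where `s` plays the role of `t*`). -/
def onePlusRange (t : E →ₗ.[ℂ] F) (s : F →ₗ.[ℂ] E) : Set E :=
  {u | ∃ (x : t.domain) (h : t x ∈ s.domain), (x : E) + s ⟨t x, h⟩ = u}

/-- `t` is a regular operator with adjoint `s`: it is `A`-linear, densely defined,
closed, adjointable with densely defined adjoint, and `1 + t*t` has dense range. -/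
structure IsRegular (t : E →ₗ.[ℂ] F) (s : F →ₗ.[ℂ] E) : Prop where
  amod : AModuleMap A t
  denseDom : Dense (t.domain : Set E)
  closedGraph : IsClosed (t.graph : Set (E × F))
  adj : IsAdjoint A t s
  denseAdjDom : Dense (s.domain : Set F)
  denseOnePlusRange : Dense (onePlusRange t s)

/-- The graph of `t` inside the Hilbert `A`-module `E ⊕ F`. -/
def graphSet (t : E →ₗ.[ℂ] F) : Set (C⋆ᵐᵒᵈ(Aᵐᵒᵖ, E × F)) :=
  {w | ∃ x : t.domain, WithCStarModule.equiv Aᵐᵒᵖ (E × F) w = ((x : E), t x)}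

/-- The range of `P_F ∘ P_{G(t)^⊥}`, i.e. the image of `G(t)^⊥ ⊆ E ⊕ F` under the
canonical projection onto `F`. -/
def pfRange (t : E →ₗ.[ℂ] F) : Set F :=
  {y | ∃ w ∈ ortho A (graphSet A t), (WithCStarModule.equiv Aᵐᵒᵖ (E × F) w).2 = y}

end Defs

end RegularOperators

/-!
For `w = (w₁, w₂) ∈ E ⊕ F`, orthogonality to the graph of `t` says exactly that `w₂ ∈ Dom(t*)`
with `t* w₂ = -w₁`; hence `G(t)^⊥` is the flipped graph of `t*` and `P_F(G(t)^⊥) = Dom(t*)`.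
A complemented subset `S` satisfies `S^⊥⊥ = S`, so `G(t)` is closed, and if `y ⊥ Dom(t*)` then
`(0, y) ∈ G(t)^⊥⊥ = G(t)`, whence `y = 0`: the biorthogonal hypothesis turns this into density
of `Dom(t*)`. Finally, decomposing `(u, 0) = (x, t x) + (-t* y, y)` forces `y = -t x` and
`u = x + t* t x`.
-/

namespace CStarModule

variable {B M : Type*} [NonUnitalCStarAlgebra B] [PartialOrder B] [StarOrderedRing B]
  [NormedAddCommGroup M] [Module ℂ M] [SMul B M] [CStarModule B M]

lemma continuous_inner_left (z : M) : Continuous fun x : M => ⟪x, z⟫_B := by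
  refine (LipschitzWith.of_dist_le_mul (K := ‖z‖₊) fun x y => ?_).continuous
  calc dist ⟪x, z⟫_B ⟪y, z⟫_B = ‖⟪x - y, z⟫_B‖ := by rw [dist_eq_norm, inner_sub_left]
    _ ≤ ‖x - y‖ * ‖z‖ := norm_inner_le M
    _ = ‖z‖ * dist x y := by rw [dist_eq_norm, mul_comm]

lemma ext_inner_left_of_dense {D : Set M} (hD : Dense D) {z w : M}
    (h : ∀ x ∈ D, ⟪x, z⟫_B = ⟪x, w⟫_B) : z = w := by
  have hzero : (fun x : M => ⟪x, z - w⟫_B) = fun _ => 0 :=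
    (continuous_inner_left _).ext_on hD continuous_const fun x hx => by simp [h x hx]
  exact sub_eq_zero.mp (inner_self.mp (congrFun hzero (z - w)))

end CStarModule

namespace RegularOperators

lemma graphSet_eq_range {A E F : Type*} [NormedAddCommGroup E] [Module ℂ E]
    [NormedAddCommGroup F] [Module ℂ F] (t : E →ₗ.[ℂ] F) :
    graphSet A t =
      Set.range fun x : t.domain => (WithCStarModule.equiv _ _).symm ((x : E), t x) := by
  ext w
  simp only [graphSet, Set.mem_ofPred_eq, Set.mem_range, Equiv.symm_apply_eq]
  exact exists_congr fun _ => eq_comm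

variable {A : Type*} [NonUnitalCStarAlgebra A] [PartialOrder A]

section Ortho

variable {M : Type*} [NormedAddCommGroup M] [Module ℂ M] [SMul Aᵐᵒᵖ M] [CStarModule Aᵐᵒᵖ M]

lemma ortho_eq_univ_of_subset_zero {S : Set M} (hS : S ⊆ {0}) : ortho A S = Set.univ :=
  Set.eq_univ_of_forall fun y u hu => by rw [hS hu, CStarModule.inner_zero_left]

lemma OrthoComplemented.ortho_ortho_subset {S : Set M} (hS : OrthoComplemented A S) :
    ortho A (ortho A S) ⊆ S := by
  intro z hz
  obtain ⟨u, hu, v, hv, rfl⟩ := hS z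
  have hvu : ⟪v, u⟫_(Aᵐᵒᵖ) = 0 := by rw [← CStarModule.star_inner, hv u hu, star_zero]
  have hvv : ⟪v, v⟫_(Aᵐᵒᵖ) = 0 := by
    simpa [CStarModule.inner_add_right, hvu] using hz v hv
  rwa [CStarModule.inner_self.mp hvv, add_zero]

variable [StarOrderedRing A]

lemma closure_subset_ortho_ortho (S : Set M) : closure S ⊆ ortho A (ortho A S) := by
  intro z hz v hv
  have hzv : ⟪z, v⟫_(Aᵐᵒᵖ) = 0 :=
    Set.MapsTo.closure_left (f := (⟪·, v⟫_(Aᵐᵒᵖ))) (t := {0}) (fun u hu => hv u hu)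
      (CStarModule.continuous_inner_left v) isClosed_singleton hz
  rw [← CStarModule.star_inner, hzv, star_zero]

lemma OrthoComplemented.isClosed {S : Set M} (hS : OrthoComplemented A S) : IsClosed S :=
  isClosed_of_closure_subset ((closure_subset_ortho_ortho S).trans hS.ortho_ortho_subset)

end Ortho

variable {E F : Type*}
  [NormedAddCommGroup E] [Module ℂ E] [SMul Aᵐᵒᵖ E] [CStarModule Aᵐᵒᵖ E]
  [NormedAddCommGroup F] [Module ℂ F] [SMul Aᵐᵒᵖ F] [CStarModule Aᵐᵒᵖ F]

section Adjoint

variable (A) in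
def adjDomainSubmodule (t : E →ₗ.[ℂ] F) : Submodule ℂ F where
  carrier := adjDomain A t
  zero_mem' := ⟨0, fun x => by simp⟩
  add_mem' := by
    rintro y₁ y₂ ⟨z₁, h₁⟩ ⟨z₂, h₂⟩
    exact ⟨z₁ + z₂, fun x => by simp [h₁ x, h₂ x]⟩
  smul_mem' := by
    rintro c y ⟨z, h⟩
    exact ⟨c • z, fun x => by simp [h x]⟩

variable [StarOrderedRing A] {t : E →ₗ.[ℂ] F}

lemma adjDomain_witness_unique (hdense : Dense (t.domain : Set E)) {y : F} {z w : E}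
    (hz : ∀ x : t.domain, ⟪t x, y⟫_(Aᵐᵒᵖ) = ⟪(x : E), z⟫_(Aᵐᵒᵖ))
    (hw : ∀ x : t.domain, ⟪t x, y⟫_(Aᵐᵒᵖ) = ⟪(x : E), w⟫_(Aᵐᵒᵖ)) : z = w :=
  CStarModule.ext_inner_left_of_dense hdense fun x hx => (hz ⟨x, hx⟩).symm.trans (hw ⟨x, hx⟩)

variable (A t) in
/-- Density of `Dom(t)` makes the witness `z` of `y ∈ adjDomain A t` unique, which is what
makes the chosen witness linear in `y`. -/
noncomputable def adjoint (hdense : Dense (t.domain : Set E)) : F →ₗ.[ℂ] E where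
  domain := adjDomainSubmodule A t
  toFun :=
    { toFun := fun y => y.2.choose
      map_add' := fun y₁ y₂ => adjDomain_witness_unique hdense (y₁ + y₂).2.choose_spec
        fun x => by
          simp only [Submodule.coe_add, CStarModule.inner_add_right,
            y₁.2.choose_spec x, y₂.2.choose_spec x]
      map_smul' := fun c y => adjDomain_witness_unique hdense (c • y).2.choose_spec
        fun x => by
          simp only [Submodule.coe_smul, CStarModule.inner_smul_right_complex,
            y.2.choose_spec x, RingHom.id_apply] }

lemma inner_adjoint_apply (hdense : Dense (t.domain : Set E)) (x : t.domain)
    (y : (adjoint A t hdense).domain) :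
    ⟪t x, (y : F)⟫_(Aᵐᵒᵖ) = ⟪(x : E), adjoint A t hdense y⟫_(Aᵐᵒᵖ) :=
  y.2.choose_spec x

lemma isAdjoint_adjoint (hdense : Dense (t.domain : Set E)) :
    IsAdjoint A t (adjoint A t hdense) :=
  ⟨rfl, inner_adjoint_apply hdense⟩

lemma adjoint_apply_eq (hdense : Dense (t.domain : Set E)) {y : F} {z : E}
    (h : ∀ x : t.domain, ⟪t x, y⟫_(Aᵐᵒᵖ) = ⟪(x : E), z⟫_(Aᵐᵒᵖ)) :
    ∃ hy : y ∈ (adjoint A t hdense).domain, adjoint A t hdense ⟨y, hy⟩ = z :=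
  ⟨⟨z, h⟩, adjDomain_witness_unique hdense (inner_adjoint_apply hdense · ⟨y, ⟨z, h⟩⟩) h⟩

end Adjoint

section Graph

variable [StarOrderedRing A] {t : E →ₗ.[ℂ] F}

lemma mem_ortho_graphSet_iff {w : C⋆ᵐᵒᵈ(Aᵐᵒᵖ, E × F)} :
    w ∈ ortho A (graphSet A t) ↔
      ∀ x : t.domain, ⟪t x, w.2⟫_(Aᵐᵒᵖ) = ⟪(x : E), -w.1⟫_(Aᵐᵒᵖ) := by
  simp only [ortho, graphSet_eq_range, Set.forall_mem_range, Set.mem_ofPred_eq,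
    WithCStarModule.prod_inner, WithCStarModule.equiv_symm_fst, WithCStarModule.equiv_symm_snd,
    CStarModule.inner_neg_right, add_eq_zero_iff_neg_eq, eq_comm]

lemma pfRange_eq_adjDomain (t : E →ₗ.[ℂ] F) : pfRange A t = adjDomain A t := by
  ext y
  constructor
  · rintro ⟨w, hw, rfl⟩
    exact ⟨-w.1, mem_ortho_graphSet_iff.mp hw⟩
  · rintro ⟨z, hz⟩
    refine ⟨(WithCStarModule.equiv _ _).symm (-z, y), mem_ortho_graphSet_iff.mpr fun x => ?_, rfl⟩
    simpa using hz x

lemma ortho_adjDomain_subset_zero (hgraph : OrthoComplemented A (graphSet A t)) :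
    ortho A (adjDomain A t) ⊆ {0} := by
  intro y hy
  set w := (WithCStarModule.equiv Aᵐᵒᵖ (E × F)).symm (0, y)
  have hw : w ∈ ortho A (ortho A (graphSet A t)) := fun v hv => by
    rw [WithCStarModule.prod_inner]
    simpa [w] using hy v.2 ⟨-v.1, mem_ortho_graphSet_iff.mp hv⟩
  obtain ⟨x, hx⟩ := hgraph.ortho_ortho_subset hw
  obtain ⟨hx0, hxy⟩ := Prod.ext_iff.mp hx
  obtain rfl : x = 0 := Subtype.ext hx0.symm
  simpa [w] using hxy

lemma dense_adjDomain (hgraph : OrthoComplemented A (graphSet A t))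
    (hbi : closure (pfRange A t) = ortho A (ortho A (pfRange A t))) :
    Dense (adjDomain A t) := by
  rw [dense_iff_closure_eq, ← pfRange_eq_adjDomain, hbi, pfRange_eq_adjDomain,
    ortho_eq_univ_of_subset_zero (ortho_adjDomain_subset_zero hgraph)]

lemma isClosed_graph (hgraph : OrthoComplemented A (graphSet A t)) :
    IsClosed (t.graph : Set (E × F)) := by
  have hpre : (t.graph : Set (E × F)) =
      (WithCStarModule.equiv Aᵐᵒᵖ (E × F)).symm ⁻¹' graphSet A t := by
    ext p
    simp [graphSet, LinearPMap.mem_graph_iff, Prod.ext_iff, eq_comm]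
  rw [hpre]
  exact hgraph.isClosed.preimage (WithCStarModule.uniformEquiv (A := Aᵐᵒᵖ)).symm.continuous

lemma exists_add_adjoint_apply_eq (hdense : Dense (t.domain : Set E))
    (hgraph : OrthoComplemented A (graphSet A t)) (u : E) :
    ∃ (x : t.domain) (h : t x ∈ (adjoint A t hdense).domain),
      (x : E) + adjoint A t hdense ⟨t x, h⟩ = u := by
  obtain ⟨g, ⟨x, hx⟩, v, hv, huv⟩ := hgraph ((WithCStarModule.equiv _ _).symm (u, 0))
  have hsum := congrArg (WithCStarModule.equiv Aᵐᵒᵖ (E × F)) huv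
  rw [Equiv.apply_symm_apply, WithCStarModule.equiv_add, hx] at hsum
  obtain ⟨hu, hv2⟩ := Prod.ext_iff.mp hsum
  simp only [Prod.fst_add, Prod.snd_add, WithCStarModule.equiv_fst, WithCStarModule.equiv_snd]
    at hu hv2
  replace hv2 : v.2 = -t x := (neg_eq_of_add_eq_zero_right hv2.symm).symm
  obtain ⟨htx, hadj⟩ := adjoint_apply_eq hdense (y := t x) (z := v.1) fun x' => by
    simpa [hv2] using mem_ortho_graphSet_iff.mp hv x'
  exact ⟨x, htx, by rw [hadj, hu]⟩

end Graph

end RegularOperators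

open RegularOperators
variable {A : Type*} [NonUnitalCStarAlgebra A] [PartialOrder A] [StarOrderedRing A]
variable {E F : Type*}
  [NormedAddCommGroup E] [Module ℂ E] [SMul Aᵐᵒᵖ E] [CStarModule Aᵐᵒᵖ E] [CompleteSpace E]
  [NormedAddCommGroup F] [Module ℂ F] [SMul Aᵐᵒᵖ F] [CStarModule Aᵐᵒᵖ F] [CompleteSpace F]

theorem adjointable_of_graph_orthoComplemented_general (t : E →ₗ.[ℂ] F)
    (hdense : Dense (t.domain : Set E))
    (hgraph : OrthoComplemented A (graphSet A t))
    (hbi : closure (pfRange A t) = ortho A (ortho A (pfRange A t))) :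
    ∃ s : F →ₗ.[ℂ] E, IsAdjoint A t s ∧ Dense (s.domain : Set F) ∧
      IsClosed (t.graph : Set (E × F)) ∧
      ∀ u : E, ∃ (x : t.domain) (h : t x ∈ s.domain), (x : E) + s ⟨t x, h⟩ = u :=
  ⟨adjoint A t hdense, isAdjoint_adjoint hdense, dense_adjDomain hgraph hbi,
    isClosed_graph hgraph, exists_add_adjoint_apply_eq hdense hgraph⟩

/-- if the graph of a densely defined `A`-linear operator `t` is
orthogonally complemented in `E ⊕ F` and the range of `P_F ∘ P_{G(t)^⊥}` is dense in
its biorthogonal complement, then `t` is adjointable with densely defined adjoint,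
`t` is closed, and `1 + t*t` is surjective. -/
theorem adjointable_of_graph_orthoComplemented (t : E →ₗ.[ℂ] F)
    (hmod : AModuleMap A t) (hdense : Dense (t.domain : Set E))
    (hgraph : OrthoComplemented A (graphSet A t))
    (hbi : closure (pfRange A t) = ortho A (ortho A (pfRange A t))) :
    ∃ s : F →ₗ.[ℂ] E, IsAdjoint A t s ∧ Dense (s.domain : Set F) ∧
      IsClosed (t.graph : Set (E × F)) ∧
      ∀ u : E, ∃ (x : t.domain) (h : t x ∈ s.domain), (x : E) + s ⟨t x, h⟩ = u :=
  adjointable_of_graph_orthoComplemented_general t hdense hgraph hbi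
end

section
/- Let t ∈ R(E,F) be a regular operator such that Ker(t) is orthogonally complemented in E and t is bounded below on Ker(t)^⊥ ∩ Dom(t) by a constant c > 0. Then Ran(t) is closed in F. -/
/- Framework: Hilbert C*-modules over a C*-algebra `A` (via Mathlib's `CStarModule`),
densely defined operators as `LinearPMap`s, `A`-valued orthogonality, adjoints,
regularity, graphs inside `E ⊕ F`. -/

open scoped InnerProductSpace RightActions WithCStarModule

/-! The kernel component of a decomposition `x = u + v` is killed by `t`, so every point of
`Ran(t)` is the image of a point of `Ker(t)^⊥`. On `Ker(t)^⊥` the lower bound turns a Cauchy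
sequence in the range into a Cauchy sequence of preimages, and the closed graph contains the
pair of limits. -/

theorem cauchySeq_of_dist_le_mul_dist {α β : Type*} [PseudoMetricSpace α]
    [PseudoMetricSpace β] {u : ℕ → α} {v : ℕ → β} {K : ℝ}
    (huv : ∀ m n, dist (u m) (u n) ≤ K * dist (v m) (v n)) (hv : CauchySeq v) :
    CauchySeq u := by
  rw [cauchySeq_iff_tendsto_dist_atTop_0] at hv ⊢
  exact squeeze_zero (fun _ ↦ dist_nonneg) (fun p : ℕ × ℕ ↦ huv p.1 p.2)
    (by simpa using hv.const_mul K)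

theorem LinearPMap.isClosed_range_of_bddBelow_on {R E F : Type*} [Ring R]
    [NormedAddCommGroup E] [Module R E] [CompleteSpace E] [NormedAddCommGroup F] [Module R F]
    {t : E →ₗ.[R] F} (ht : _root_.IsClosed (t.graph : Set (E × F))) (V : AddSubgroup E)
    (hV : ∀ x : t.domain, ∃ v : t.domain, (v : E) ∈ V ∧ t v = t x) {c : ℝ} (hc : 0 < c)
    (hbdd : ∀ x : t.domain, (x : E) ∈ V → c * ‖(x : E)‖ ≤ ‖t x‖) :
    _root_.IsClosed (Set.range t) := by
  refine IsSeqClosed.isClosed fun y y_lim hy hlim ↦ ?_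
  choose x hx using hy
  choose v hvV hvx using fun n ↦ hV (x n)
  have hty : ∀ n, t (v n) = y n := fun n ↦ (hvx n).trans (hx n)
  have hdist : ∀ m n, dist (v m : E) (v n) ≤ c⁻¹ * dist (y m) (y n) := by
    intro m n
    rw [dist_eq_norm, dist_eq_norm, ← hty, ← hty, ← t.map_sub, le_inv_mul_iff₀ hc]
    exact hbdd (v m - v n) (V.sub_mem (hvV m) (hvV n))
  obtain ⟨v_lim, hv_lim⟩ := cauchySeq_tendsto_of_complete
    (cauchySeq_of_dist_le_mul_dist hdist hlim.cauchySeq)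
  have hgraph : (v_lim, y_lim) ∈ t.graph :=
    ht.mem_of_tendsto (hv_lim.prodMk_nhds hlim) (.of_forall fun n ↦ hty n ▸ t.mem_graph (v n))
  obtain ⟨z, -, hz⟩ := t.mem_graph_iff.1 hgraph
  exact ⟨z, hz⟩

namespace RegularOperators

variable {A : Type*} [NonUnitalCStarAlgebra A] [PartialOrder A]
  {E F : Type*} [NormedAddCommGroup E] [Module ℂ E] [SMul Aᵐᵒᵖ E] [CStarModule Aᵐᵒᵖ E]
  [NormedAddCommGroup F] [Module ℂ F]

variable (A) in
def orthoAddSubgroup (S : Set E) : AddSubgroup E where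
  carrier := ortho A S
  add_mem' hx hy u hu := by simp [hx u hu, hy u hu]
  zero_mem' _ _ := CStarModule.inner_zero_right
  neg_mem' hx u hu := by simp [hx u hu]

theorem exists_mem_ortho_kerSet_apply_eq {t : E →ₗ.[ℂ] F}
    (hker : OrthoComplemented A (kerSet t)) (x : t.domain) :
    ∃ v : t.domain, (v : E) ∈ ortho A (kerSet t) ∧ t v = t x := by
  obtain ⟨u, ⟨hu_dom, hu⟩, v, hv, hxuv⟩ := hker x
  have hv_dom : v ∈ t.domain := by
    simpa [hxuv] using sub_mem x.2 hu_dom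
  refine ⟨⟨v, hv_dom⟩, hv, ?_⟩
  rw [show x = ⟨u, hu_dom⟩ + ⟨v, hv_dom⟩ from Subtype.ext hxuv, t.map_add, hu, zero_add]

end RegularOperators


open RegularOperators
variable {A : Type*} [NonUnitalCStarAlgebra A] [PartialOrder A] [StarOrderedRing A]
variable {E F : Type*}
  [NormedAddCommGroup E] [Module ℂ E] [SMul Aᵐᵒᵖ E] [CStarModule Aᵐᵒᵖ E] [CompleteSpace E]
  [NormedAddCommGroup F] [Module ℂ F] [SMul Aᵐᵒᵖ F] [CStarModule Aᵐᵒᵖ F] [CompleteSpace F]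

/-- if `Ker(t)` is orthogonally complemented in `E` and the regular
operator `t` is bounded below on `Ker(t)^⊥ ∩ Dom(t)`, then `Ran(t)` is closed. -/
theorem ranSet_isClosed_of_orthoComplemented_of_boundedBelow
    (t : E →ₗ.[ℂ] F) (s : F →ₗ.[ℂ] E) (ht : IsRegular A t s)
    (hker : OrthoComplemented A (kerSet t)) (c : ℝ) (hc : 0 < c)
    (hbdd : ∀ x : t.domain, (x : E) ∈ ortho A (kerSet t) → c * ‖(x : E)‖ ≤ ‖t x‖) :
    IsClosed (ranSet t) :=
  t.isClosed_range_of_bddBelow_on ht.closedGraph (orthoAddSubgroup A (kerSet t))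
    (exists_mem_ortho_kerSet_apply_eq hker) hc hbdd
end
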